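/- Let μ be a positive Radon measure and 𝒮 a sparse family of cubes with constant τ < 1. Suppose B: L²×L² → ℝ₊ is a bi-sublinear form admitting a localization B = Σ_{R ∈ 𝒮_max} B_R and for each R ∈ 𝒮 there is an exceptional set E_R ⊆ R with μ(E_R) ≤ μ(R)/2 such that B_R(f,g) ≤ C a_R ⟨|f|⟩_R ⟨|g|⟩_R μ(R) + Σ_{R' ∈ 𝒮, R' maximal in E_R} B_{R'}(f,g). If additionally B_R(f,g) is finite and the recursion terminates (e.g., only finitely many scales), then B(f,g) ≲ Σ_{R ∈ 𝒮} a_R ⟨|f|⟩_R ⟨|g|⟩_R μ(R). -/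

import Mathlib

open MeasureTheory Set
open scoped ENNReal

/-!
Write `t R = a_R ⟨f⟩_R ⟨g⟩_R μ(R)` and `F R = ∑_{T ∈ 𝒮, T ⊆ R} t T`. By strong induction on the
depth `d`, the recursive estimate gives `B R ≤ C (t R + ∑_{R' ∈ M R} F R') ≤ C F R`: the children
`R' ∈ M R` are disjoint, so every nonempty cube below them is counted at most once, and none of
them contains `R` itself because `μ R' ≤ μ (E R) ≤ μ R / 2`. Summing over the disjoint maximal
cubes then counts every cube of `𝒮` at most once.
-/

section Subfamilies

variable {X : Type*}

theorem tsum_tsum_subsets_le_of_pairwiseDisjoint {𝒬 : Set (Set X)} (h𝒬 : 𝒬.PairwiseDisjoint id)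
    (𝒮 : Set (Set X)) {w : Set X → ℝ≥0∞} (hw : w ∅ = 0) :
    ∑' P : 𝒬, ∑' T : {T ∈ 𝒮 | T ⊆ P.1}, w T ≤ ∑' T : {T ∈ 𝒮 | ∃ P ∈ 𝒬, T ⊆ P}, w T := by
  simp_rw [tsum_subtype]
  rw [ENNReal.tsum_comm]
  refine ENNReal.tsum_le_tsum fun T => ?_
  rcases T.eq_empty_or_nonempty with rfl | hT
  · simp [Set.indicator, hw]
  by_cases hcov : ∃ P ∈ 𝒬, T ∈ 𝒮 ∧ T ⊆ P
  · obtain ⟨P, hP, hT𝒮, hTP⟩ := hcov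
    have hunique : ∀ Q : 𝒬, Q ≠ ⟨P, hP⟩ → {T ∈ 𝒮 | T ⊆ Q.1}.indicator w T = 0 := by
      refine fun Q hQP => indicator_of_notMem (fun hTQ => ?_) _
      have hdisj : Disjoint T T :=
        (h𝒬 Q.2 hP fun h => hQP (Subtype.ext h)).mono hTQ.2 hTP
      exact hT.ne_empty (disjoint_self.mp hdisj)
    rw [tsum_eq_single _ hunique, indicator_of_mem (show T ∈ {T ∈ 𝒮 | T ⊆ P} from ⟨hT𝒮, hTP⟩),
      indicator_of_mem (show T ∈ {T ∈ 𝒮 | ∃ P ∈ 𝒬, T ⊆ P} from ⟨hT𝒮, P, hP, hTP⟩)]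
  · push Not at hcov
    have hzero : ∀ Q : 𝒬, {T ∈ 𝒮 | T ⊆ Q.1}.indicator w T = 0 :=
      fun Q => indicator_of_notMem (fun hTQ => hcov Q.1 Q.2 hTQ.1 hTQ.2) _
    simp [hzero]

theorem add_tsum_tsum_subsets_le {𝒮 𝒬 : Set (Set X)} {R : Set X} (hR : R ∈ 𝒮)
    (h𝒬R : ∀ P ∈ 𝒬, P ⊆ R) (h𝒬 : 𝒬.PairwiseDisjoint id) {w : Set X → ℝ≥0∞} (hw : w ∅ = 0)
    (hproper : w R ≠ 0 → ∀ P ∈ 𝒬, ¬R ⊆ P) :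
    w R + ∑' P : 𝒬, ∑' T : {T ∈ 𝒮 | T ⊆ P.1}, w T ≤ ∑' T : {T ∈ 𝒮 | T ⊆ R}, w T := by
  set 𝒜 := {T ∈ 𝒮 | ∃ P ∈ 𝒬, T ⊆ P}
  have h𝒜R : 𝒜 ⊆ {T ∈ 𝒮 | T ⊆ R} := fun T ⟨hT, P, hP, hTP⟩ => ⟨hT, hTP.trans (h𝒬R P hP)⟩
  grw [tsum_tsum_subsets_le_of_pairwiseDisjoint h𝒬 𝒮 hw]
  by_cases hR0 : w R = 0
  · rw [hR0, zero_add]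
    exact ENNReal.tsum_mono_subtype w h𝒜R
  have hR𝒜 : Disjoint {R} 𝒜 :=
    disjoint_singleton_left.mpr fun ⟨_, P, hP, hRP⟩ => hproper hR0 P hP hRP
  calc w R + ∑' T : 𝒜, w T = ∑' T : ({R} ∪ 𝒜 : Set (Set X)), w T := by
        rw [ENNReal.summable.tsum_union_disjoint hR𝒜 ENNReal.summable, tsum_singleton]
    _ ≤ ∑' T : {T ∈ 𝒮 | T ⊆ R}, w T :=
        ENNReal.tsum_mono_subtype w (union_subset (singleton_subset_iff.mpr ⟨hR, subset_rfl⟩) h𝒜R)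

theorem le_mul_tsum_subsets_of_recursive_bound {𝒮 : Set (Set X)} {B t : Set X → ℝ≥0∞}
    {C : ℝ≥0∞} {M : Set X → Set (Set X)} {d : Set X → ℕ} (ht : t ∅ = 0)
    (hMsub : ∀ R ∈ 𝒮, M R ⊆ 𝒮) (hMle : ∀ R ∈ 𝒮, ∀ R' ∈ M R, R' ⊆ R)
    (hMdisj : ∀ R ∈ 𝒮, (M R).PairwiseDisjoint id)
    (hproper : ∀ R ∈ 𝒮, t R ≠ 0 → ∀ R' ∈ M R, ¬R ⊆ R')
    (hd : ∀ R ∈ 𝒮, ∀ R' ∈ M R, d R' < d R)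
    (hrec : ∀ R ∈ 𝒮, B R ≤ C * t R + ∑' R' : M R, B R'.1) :
    ∀ R ∈ 𝒮, B R ≤ C * ∑' T : {T ∈ 𝒮 | T ⊆ R}, t T := by
  suffices ∀ n, ∀ R ∈ 𝒮, d R = n → B R ≤ C * ∑' T : {T ∈ 𝒮 | T ⊆ R}, t T from
    fun R hR => this _ R hR rfl
  intro n
  induction n using Nat.strong_induction_on with
  | _ n ih =>
    rintro R hR rfl
    calc B R ≤ C * t R + ∑' R' : M R, B R'.1 := hrec R hR
      _ ≤ C * t R + ∑' R' : M R, C * ∑' T : {T ∈ 𝒮 | T ⊆ R'.1}, t T := by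
          gcongr with R'
          exact ih _ (hd R hR R'.1 R'.2) R'.1 (hMsub R hR R'.2) rfl
      _ = C * (t R + ∑' R' : M R, ∑' T : {T ∈ 𝒮 | T ⊆ R'.1}, t T) := by
          rw [ENNReal.tsum_mul_left, mul_add]
      _ ≤ C * ∑' T : {T ∈ 𝒮 | T ⊆ R}, t T := by
          gcongr
          exact add_tsum_tsum_subsets_le hR (hMle R hR) (hMdisj R hR) ht (hproper R hR)

end Subfamilies

noncomputable def sparseSummand {X : Type*} [MeasurableSpace X] (μ : Measure X)
    (f g : X → ℝ≥0∞) (a : Set X → ℝ≥0∞) (R : Set X) : ℝ≥0∞ :=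
  a R * ((∫⁻ x in R, f x ∂μ) / μ R) * ((∫⁻ x in R, g x ∂μ) / μ R) * μ R

theorem sparseSummand_empty {X : Type*} [MeasurableSpace X] (μ : Measure X)
    (f g : X → ℝ≥0∞) (a : Set X → ℝ≥0∞) : sparseSummand μ f g a ∅ = 0 := by
  simp [sparseSummand]

theorem not_subset_of_sparseSummand_ne_zero {X : Type*} [MeasurableSpace X] {μ : Measure X}
    {f g : X → ℝ≥0∞} {a : Set X → ℝ≥0∞} {R S : Set X} (h : sparseSummand μ f g a R ≠ 0)
    (hS : μ S ≤ μ R / 2) : ¬R ⊆ S := by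
  have hμR0 : μ R ≠ 0 := fun h0 => h (by simp [sparseSummand, h0])
  have hμRtop : μ R ≠ ∞ := fun htop => h (by simp [sparseSummand, htop])
  exact fun hRS => (ENNReal.half_lt_self hμR0 hμRtop).not_ge ((measure_mono hRS).trans hS)

theorem stmt16 {X : Type*} [MeasurableSpace X] (μ : Measure X)
    (𝒮 : Set (Set X))
    (f g : X → ℝ≥0∞) (B : Set X → ℝ≥0∞) (a : Set X → ℝ≥0∞) (C : ℝ≥0∞)
    (E : Set X → Set X) (M : Set X → Set (Set X)) (d : Set X → ℕ)
    (hE : ∀ R ∈ 𝒮, E R ⊆ R ∧ μ (E R) ≤ μ R / 2)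
    (hMsub : ∀ R ∈ 𝒮, M R ⊆ 𝒮)
    (hME : ∀ R ∈ 𝒮, ∀ R' ∈ M R, R' ⊆ E R)
    (hMdisj : ∀ R ∈ 𝒮, (M R).PairwiseDisjoint id)
    (hd : ∀ R ∈ 𝒮, ∀ R' ∈ M R, d R' < d R)
    (hrec : ∀ R ∈ 𝒮, B R ≤ C * a R * ((∫⁻ x in R, f x ∂μ) / μ R) *
        ((∫⁻ x in R, g x ∂μ) / μ R) * μ R + ∑' R' : M R, B R'.1)
    (Btot : ℝ≥0∞) (𝒮max : Set (Set X)) (hmaxsub : 𝒮max ⊆ 𝒮)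
    (hmaxdisj : 𝒮max.PairwiseDisjoint id)
    (hBtot : Btot = ∑' R : 𝒮max, B R.1) :
    Btot ≤ C * ∑' R : 𝒮, a R.1 * ((∫⁻ x in R.1, f x ∂μ) / μ R.1) *
        ((∫⁻ x in R.1, g x ∂μ) / μ R.1) * μ R.1 := by
  set t := sparseSummand μ f g a
  have ht : t ∅ = 0 := sparseSummand_empty μ f g a
  have hproper : ∀ R ∈ 𝒮, t R ≠ 0 → ∀ R' ∈ M R, ¬R ⊆ R' := fun R hR htR R' hR' =>
    not_subset_of_sparseSummand_ne_zero htR ((measure_mono (hME R hR R' hR')).trans (hE R hR).2)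
  have hlocal := le_mul_tsum_subsets_of_recursive_bound ht hMsub
    (fun R hR R' hR' => (hME R hR R' hR').trans (hE R hR).1) hMdisj hproper hd
    (fun R hR => by simpa only [t, sparseSummand, mul_assoc] using hrec R hR)
  calc Btot = ∑' R : 𝒮max, B R.1 := hBtot
    _ ≤ ∑' R : 𝒮max, C * ∑' T : {T ∈ 𝒮 | T ⊆ R.1}, t T :=
        ENNReal.tsum_le_tsum fun R => hlocal R.1 (hmaxsub R.2)
    _ = C * ∑' R : 𝒮max, ∑' T : {T ∈ 𝒮 | T ⊆ R.1}, t T := ENNReal.tsum_mul_left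
    _ ≤ C * ∑' T : {T ∈ 𝒮 | ∃ P ∈ 𝒮max, T ⊆ P}, t T := by
        grw [tsum_tsum_subsets_le_of_pairwiseDisjoint hmaxdisj 𝒮 ht]
    _ ≤ C * ∑' T : 𝒮, t T := by
        grw [ENNReal.tsum_mono_subtype t (fun T hT => hT.1 : {T ∈ 𝒮 | ∃ P ∈ 𝒮max, T ⊆ P} ⊆ 𝒮)]
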